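/- arXiv:1604.05419 — 2 statements merged into one kernel-verified Lean document; each statement's English description precedes it below -/
import Mathlib

section
/- Let ⊕ be a combinator on pairs of total preorders over finite W whose domain is restricted to S-variant pairs. Then ⊕ satisfies Pareto weak preference (⊕WPU: x ≼₁ y and x ≼₂ y imply x ≼₁⊕₂ y) if and only if it satisfies (⊕WPU+: x ≼₁ y and z ≼₂ y imply x ≼₁⊕₂ y or z ≼₁⊕₂ y). -/
def Tpo {W : Type*} (R : W → W → Prop) : Prop :=
  (∀ x, R x x) ∧ (∀ x y z, R x y → R y z → R x z) ∧ (∀ x y, R x y ∨ R y x)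

def strictP {W : Type*} (R : W → W → Prop) (x y : W) : Prop := R x y ∧ ¬ R y x

def symmP {W : Type*} (R : W → W → Prop) (x y : W) : Prop := R x y ∧ R y x

def minSet {W : Type*} (R : W → W → Prop) (S : Set W) : Set W := {x | x ∈ S ∧ ∀ y ∈ S, R x y}

def SVariants {W : Type*} (R1 R2 : W → W → Prop) (S : Set W) : Prop :=
  ∀ x y, ((x ∈ S ∧ y ∈ S) ∨ (x ∉ S ∧ y ∉ S)) → (R1 x y ↔ R2 x y)

/-!
If `x ≼₁ y` and `z ≼₂ y`, one of the two pairs `(x, y)`, `(z, y)` is already a Pareto pair, so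
`⊕WPU` applied to it gives `⊕WPU+`. Indeed, if `x` lies on the same side of `S` as `y`, then
`x ≼₂ y` because the preorders agree there; likewise `z ≼₁ y` if `z` lies on the side of `y`.
Otherwise `x` and `z` both lie on the other side, and if `z ⋠₁ y` then `x ≼₁ y ≼₁ z` gives
`x ≼₁ z`, hence `x ≼₂ z ≼₂ y`. The converse is `⊕WPU+` with `z = x`.
-/

theorem SVariants.iff_of_mem_iff {W : Type*} {R1 R2 : W → W → Prop} {S : Set W}
    (hS : SVariants R1 R2 S) {x y : W} (hxy : x ∈ S ↔ y ∈ S) : R1 x y ↔ R2 x y :=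
  hS x y (by tauto)

theorem SVariants.pareto_of_le_of_le {W : Type*} {R1 R2 : W → W → Prop} {S : Set W}
    (h1 : Tpo R1) (h2 : Tpo R2) (hS : SVariants R1 R2 S) {x y z : W}
    (hxy : R1 x y) (hzy : R2 z y) : R2 x y ∨ R1 z y := by
  obtain ⟨-, trans1, total1⟩ := h1
  obtain ⟨-, trans2, -⟩ := h2
  by_cases hxS : x ∈ S ↔ y ∈ S
  · exact Or.inl ((hS.iff_of_mem_iff hxS).mp hxy)
  by_cases hzS : z ∈ S ↔ y ∈ S
  · exact Or.inr ((hS.iff_of_mem_iff hzS).mpr hzy)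
  refine or_iff_not_imp_right.mpr fun hzy₁ => ?_
  have hyz : R1 y z := (total1 z y).resolve_left hzy₁
  have hxz : R2 x z := (hS.iff_of_mem_iff (by tauto)).mp (trans1 x y z hxy hyz)
  exact trans2 x z y hxz hzy

theorem stmt4_general {W : Type*}
    (C : (W → W → Prop) → (W → W → Prop) → (W → W → Prop)) :
    (∀ R1 R2, Tpo R1 → Tpo R2 → (∃ S : Set W, SVariants R1 R2 S) →
        ∀ x y : W, R1 x y → R2 x y → C R1 R2 x y)
    ↔ (∀ R1 R2, Tpo R1 → Tpo R2 → (∃ S : Set W, SVariants R1 R2 S) →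
        ∀ x y z : W, R1 x y → R2 z y → C R1 R2 x y ∨ C R1 R2 z y) := by
  constructor
  · rintro hWPU R1 R2 h1 h2 ⟨S, hS⟩ x y z hxy hzy
    rcases hS.pareto_of_le_of_le h1 h2 hxy hzy with h2xy | h1zy
    · exact Or.inl (hWPU R1 R2 h1 h2 ⟨S, hS⟩ x y hxy h2xy)
    · exact Or.inr (hWPU R1 R2 h1 h2 ⟨S, hS⟩ z y h1zy hzy)
  · intro hWPU' R1 R2 h1 h2 hS x y hxy h2xy
    exact (hWPU' R1 R2 h1 h2 hS x y x hxy h2xy).elim id id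

theorem stmt4 {W : Type*} [Fintype W]
    (C : (W → W → Prop) → (W → W → Prop) → (W → W → Prop))
    (hC : ∀ R1 R2, Tpo R1 → Tpo R2 → Tpo (C R1 R2)) :
    (∀ R1 R2, Tpo R1 → Tpo R2 → (∃ S : Set W, SVariants R1 R2 S) →
        ∀ x y : W, R1 x y → R2 x y → C R1 R2 x y)
    ↔ (∀ R1 R2, Tpo R1 → Tpo R2 → (∃ S : Set W, SVariants R1 R2 S) →
        ∀ x y z : W, R1 x y → R2 z y → C R1 R2 x y ∨ C R1 R2 z y) :=
  stmt4_general C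
end

section
/- The Synchronous TeamQueue combination ⊕_STQ of two total preorders ≼₁, ≼₂ on finite W, defined inductively by T_i = min(≼₁, (T₁ ∪ … ∪ T_{i−1})ᶜ) ∪ min(≼₂, (T₁ ∪ … ∪ T_{i−1})ᶜ) with the combined tpo ranking x below y iff x appears in an earlier cell T_i, satisfies ⊕SPU+: if x ≺₁ y and z ≺₂ y then x ≺_STQ y or z ≺_STQ y. -/
def STQrest {W : Type*} (R1 R2 : W → W → Prop) : ℕ → Set W
  | 0 => Set.univ
  | n+1 => STQrest R1 R2 n \ (minSet R1 (STQrest R1 R2 n) ∪ minSet R2 (STQrest R1 R2 n))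

/-- x is at least as plausible as y in the STQ combination: x's cell index ≤ y's cell index. -/
def STQle {W : Type*} (R1 R2 : W → W → Prop) (x y : W) : Prop :=
  ∀ n, x ∈ STQrest R1 R2 n → y ∈ STQrest R1 R2 n

section

variable {W : Type*}

theorem Tpo.minSet_nonempty [Finite W] {R : W → W → Prop} (hR : Tpo R) {S : Set W}
    (hS : S.Nonempty) : (minSet R S).Nonempty := by
  let : Preorder W := { le := R, le_refl := hR.1, le_trans := hR.2.1 }
  obtain ⟨x, hx⟩ := S.toFinite.exists_minimal hS
  exact ⟨x, hx.prop, fun y hy => (hR.2.2 x y).elim id (hx.le_of_le hy)⟩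

namespace STQrest

variable {R1 R2 : W → W → Prop}

theorem antitone : Antitone (STQrest R1 R2) :=
  antitone_nat_of_succ_le fun _ => Set.sdiff_subset

theorem succ_ssubset (h1 : Tpo R1) [Finite W] {n : ℕ}
    (hn : (STQrest R1 R2 n).Nonempty) : STQrest R1 R2 (n + 1) ⊂ STQrest R1 R2 n := by
  obtain ⟨m, hm⟩ := h1.minSet_nonempty hn
  exact (Set.ssubset_iff_of_subset Set.sdiff_subset).mpr ⟨m, hm.1, fun hm' => hm'.2 (Or.inl hm)⟩

theorem ncard_le (h1 : Tpo R1) [Finite W] (n : ℕ) :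
    (STQrest R1 R2 n).ncard ≤ Nat.card W - n := by
  induction n with
  | zero => simp [STQrest, Set.ncard_univ]
  | succ n ih =>
    rcases (STQrest R1 R2 n).eq_empty_or_nonempty with hempty | hne
    · have : STQrest R1 R2 (n + 1) = ∅ := Set.subset_eq_empty (antitone n.le_succ) hempty
      simp [this]
    · have := Set.ncard_lt_ncard (succ_ssubset h1 hne)
      omega

theorem eq_empty_at_natCard (h1 : Tpo R1) [Finite W] :
    STQrest R1 R2 (Nat.card W) = ∅ :=
  (Set.ncard_eq_zero).mp (by simpa using ncard_le h1 (Nat.card W))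

theorem exists_mem_minSet_of_notMem {w : W} {k : ℕ} (hk : w ∉ STQrest R1 R2 k) :
    ∃ n, w ∈ minSet R1 (STQrest R1 R2 n) ∪ minSet R2 (STQrest R1 R2 n) := by
  induction k with
  | zero => exact absurd trivial hk
  | succ k ih =>
    by_cases hw : w ∈ STQrest R1 R2 k
    · exact ⟨k, by_contra fun hmin => hk ⟨hw, hmin⟩⟩
    · exact ih hw

theorem strictP_STQle {a b : W} {n : ℕ} (ha : a ∉ STQrest R1 R2 n) (hb : b ∈ STQrest R1 R2 n) :
    strictP (STQle R1 R2) a b := by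
  refine ⟨fun m ham => ?_, fun hba => ha (hba n hb)⟩
  have hmn : m ≤ n := by
    by_contra! hnm
    exact ha (antitone hnm.le ham)
  exact antitone hmn hb

end STQrest

end

theorem stmt11_general {W : Type*} [Fintype W]
    (R1 R2 : W → W → Prop) (h1 : Tpo R1) :
    ∀ x y z : W, strictP R1 x y → strictP R2 z y →
      strictP (STQle R1 R2) x y ∨ strictP (STQle R1 R2) z y := by
  intro x y z hxy hzy
  have hy : y ∉ STQrest R1 R2 (Nat.card W) := by
    rw [STQrest.eq_empty_at_natCard (R2 := R2) h1]; exact Set.notMem_empty y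
  obtain ⟨n, hmin1 | hmin2⟩ := STQrest.exists_mem_minSet_of_notMem hy
  · exact Or.inl (STQrest.strictP_STQle (fun hx => hxy.2 (hmin1.2 x hx)) hmin1.1)
  · exact Or.inr (STQrest.strictP_STQle (fun hz => hzy.2 (hmin2.2 z hz)) hmin2.1)

theorem stmt11 {W : Type*} [Fintype W] [Nonempty W]
    (R1 R2 : W → W → Prop) (h1 : Tpo R1) (h2 : Tpo R2) :
    ∀ x y z : W, strictP R1 x y → strictP R2 z y →
      strictP (STQle R1 R2) x y ∨ strictP (STQle R1 R2) z y :=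
  stmt11_general R1 R2 h1
end
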